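/- In the setting of the previous tensor-rule statement, for any b in a seminormal sl₂-crystal B and any element u of the d-fold tensor power of the standard 2-element crystal, the following trichotomy holds: deg(b ⊗ u) = deg(b) − φ(u) + ε(u) if deg(b) > φ(u); deg(b ⊗ u) = ε(u) if φ(u) − deg(b) is a nonnegative even integer; and deg(b ⊗ u) = ε(u) + 1 if φ(u) − deg(b) is a nonnegative odd integer. Correspondingly, B̃(b ⊗ u) = B̃(b) ⊗ u, b ⊗ Ẽu, or b ⊗ F̃u in the three cases respectively. -/
import Mathlib


/-- A seminormal `sl₂`-crystal (as in the previous statement). -/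
structure SL2Crystal (B : Type) where
  etil : B → Option B
  ftil : B → Option B
  eps : B → ℕ
  phi : B → ℕ
  etil_none : ∀ b, etil b = none ↔ eps b = 0
  ftil_none : ∀ b, ftil b = none ↔ phi b = 0
  etil_some : ∀ b b', etil b = some b' → eps b' + 1 = eps b ∧ phi b' = phi b + 1
  ftil_some : ∀ b b', ftil b = some b' → eps b' = eps b + 1 ∧ phi b' + 1 = phi b
  ftil_etil : ∀ b b', ftil b = some b' ↔ etil b' = some b

namespace SL2Crystal

variable {B : Type} (C : SL2Crystal B)

/-- `deg(b) = ε(b)` if `φ(b)` is even, `ε(b) + 1` if `φ(b)` is odd. -/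
def degb (b : B) : ℕ := if Even (C.phi b) then C.eps b else C.eps b + 1

/-- `B̃(b) = Ẽb` if `φ(b)` is even, `F̃b` if `φ(b)` is odd. -/
def btil (b : B) : Option B := if Even (C.phi b) then C.etil b else C.ftil b

end SL2Crystal

/- The `d`-fold tensor power of the standard two-element crystal `{u₁, u₂}`, modelled on
lists of booleans (`false ↦ u₁`, `true ↦ u₂`), via the tensor rule (2.2) of the paper,
reading `a :: l` as `a ⊗ l`. -/
namespace StdPow

/-- `φ` on tensor powers of the standard crystal. -/
def sphi : List Bool → ℕ
  | [] => 0
  | a :: l => (if a then 0 else 1) + (sphi l - (if a then 1 else 0))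

/-- `ε` on tensor powers of the standard crystal. -/
def seps : List Bool → ℕ
  | [] => 0
  | a :: l => seps l + ((if a then 1 else 0) - sphi l)

/-- `F̃` on tensor powers of the standard crystal. -/
def sft : List Bool → Option (List Bool)
  | [] => none
  | a :: l =>
    if (if a then 1 else 0) < sphi l then Option.map (a :: ·) (sft l)
    else if a then none else some (true :: l)

/-- `Ẽ` on tensor powers of the standard crystal. -/
def set : List Bool → Option (List Bool)
  | [] => none
  | a :: l =>
    if (if a then 1 else 0) ≤ sphi l then Option.map (a :: ·) (set l)
    else if a then some (false :: l) else none

end StdPow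

namespace SL2Crystal

variable {B : Type} (C : SL2Crystal B)

open StdPow

/-- `φ(b ⊗ u)` for the tensor of `B` with a power of the standard crystal. -/
def Tphi (x : B × List Bool) : ℕ := C.phi x.1 + (sphi x.2 - C.eps x.1)

/-- `ε(b ⊗ u)`. -/
def Teps (x : B × List Bool) : ℕ := seps x.2 + (C.eps x.1 - sphi x.2)

/-- `F̃(b ⊗ u)`. -/
def Tft (x : B × List Bool) : Option (B × List Bool) :=
  if C.eps x.1 < sphi x.2 then Option.map (fun u' => (x.1, u')) (sft x.2)
  else Option.map (fun b' => (b', x.2)) (C.ftil x.1)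

/-- `Ẽ(b ⊗ u)`. -/
def Tet (x : B × List Bool) : Option (B × List Bool) :=
  if C.eps x.1 ≤ sphi x.2 then Option.map (fun u' => (x.1, u')) (set x.2)
  else Option.map (fun b' => (b', x.2)) (C.etil x.1)

/-- `deg` on the tensor product crystal. -/
def Tdeg (x : B × List Bool) : ℕ := if Even (C.Tphi x) then C.Teps x else C.Teps x + 1

/-- `B̃` on the tensor product crystal. -/
def Tbtil (x : B × List Bool) : Option (B × List Bool) :=
  if Even (C.Tphi x) then C.Tet x else C.Tft x

end SL2Crystal

open StdPow in
/-- Proposition 5.7 of the paper: the trichotomy for `deg` and `B̃` on `b ⊗ u`, for `u`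
in a tensor power of the standard two-element crystal. -/
theorem statement15 {B : Type} (C : SL2Crystal B) (b : B) (u : List Bool) :
    (sphi u < C.degb b →
      C.Tdeg (b, u) = C.degb b - sphi u + seps u ∧
      C.Tbtil (b, u) = Option.map (fun b' => (b', u)) (C.btil b)) ∧
    (C.degb b ≤ sphi u → Even (sphi u - C.degb b) →
      C.Tdeg (b, u) = seps u ∧
      C.Tbtil (b, u) = Option.map (fun u' => (b, u')) (StdPow.set u)) ∧
    (C.degb b ≤ sphi u → Odd (sphi u - C.degb b) →
      C.Tdeg (b, u) = seps u + 1 ∧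
      C.Tbtil (b, u) = Option.map (fun u' => (b, u')) (sft u)) := by
  refine ⟨fun h => ⟨?_, ?_⟩, fun h h2 => ⟨?_, ?_⟩, fun h h2 => ⟨?_, ?_⟩⟩ <;>
  · simp only [SL2Crystal.degb, SL2Crystal.Tdeg, SL2Crystal.Tbtil, SL2Crystal.Tphi,
      SL2Crystal.Teps, SL2Crystal.Tet, SL2Crystal.Tft, SL2Crystal.btil,
      Nat.even_iff, Nat.odd_iff] at *
    split_ifs at * <;> first | rfl | omega
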